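/- The act-violation modality is not closed under logical consequence of its argument: there exist a model M, state s, and formulas φ, ψ such that φ → ψ holds everywhere in M and Viol^a_{i,a}(t_b, t_v, φ) holds at s, but Viol^a_{i,a}(t_b, t_v, ψ) fails at s. The failure arises because φ → ψ does not guarantee ψ → V_{i,a} on the interval [t_b, t_v]. -/

import Mathlib

open scoped Classical

/-- Tree-shaped Kripke model for a fixed norm `i` and agent `a`, as in
"Linking sanctions to norms in practice".  `V`, `D`, `Rep`, `Pun` are the
violation / deadline / repair / punishment markers `V_{i,a}`, `D_{i,a}`,
`R_{i,a}`, `P_{i,a}`; `Ra` are the transitions labelled with agent `a`. -/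
structure NormModel where
  W : Type
  root : W
  R : W → W → Prop
  Ra : W → W → Prop
  hRa : ∀ s s', Ra s s' → R s s'
  depth : W → ℕ
  hroot : depth root = 0
  hdepth : ∀ s s', R s s' → depth s' = depth s + 1
  predUnique : ∀ s' s₁ s₂, R s₁ s' → R s₂ s' → s₁ = s₂
  reach : ∀ s, Relation.ReflTransGen R root s
  V : W → Prop
  D : W → Prop
  Rep : W → Prop
  Pun : W → Prop

namespace NormModel

/-- A path: an infinite `R`-sequence starting at the root. -/
def IsPath (M : NormModel) (σ : ℕ → M.W) : Prop :=
  σ 0 = M.root ∧ ∀ n, M.R (σ n) (σ (n + 1))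

/-- Paths through a state `s`. -/
def PathThrough (M : NormModel) (σ : ℕ → M.W) (s : M.W) : Prop :=
  M.IsPath σ ∧ σ (M.depth s) = s

/-- STIT operator `E_a φ`: `φ` holds at all `a`-successors, and `φ` is not
globally true (the non-triviality condition `M, w ⊨ ¬AG⁺φ`). -/
def Ea (M : NormModel) (φ : M.W → Prop) (s : M.W) : Prop :=
  (∀ s', M.Ra s s' → φ s') ∧ ¬ (∀ s', φ s')

/-- Act-violation `Viol^a_{i,a}(t_b, t_v, φ)` at `s`:
(1) on all paths through `s` there is a past-or-current state at depth `t_v`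
satisfying `V_{i,a}` whose predecessor satisfies `E_a φ`, and
(2) at all past states with depth in `[t_b, t_v]`, `φ → V_{i,a}`. -/
def ViolA (M : NormModel) (tb tv : ℕ) (φ : M.W → Prop) (s : M.W) : Prop :=
  1 ≤ tv ∧ tv ≤ M.depth s ∧
  (∀ σ, M.PathThrough σ s → M.V (σ tv) ∧ M.Ea φ (σ (tv - 1))) ∧
  (∀ σ, M.PathThrough σ s → ∀ t, tb ≤ t → t ≤ tv → φ (σ t) → M.V (σ t))

/-- The common body of the omission-violation conditions, parametrised by the
"fulfilment or fresh violation" clause used in the counting condition (4). -/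
def ViolOBody (M : NormModel) (tb tv : ℕ) (φ : M.W → Prop) (s : M.W)
    (fresh : ℕ → (ℕ → M.W) → Prop) : Prop :=
  tv ≤ M.depth s ∧
  (∀ σ, M.PathThrough σ s → M.V (σ tv) ∧ M.D (σ tv)) ∧
  (∀ σ, M.PathThrough σ s → ∀ t, tb ≤ t → t ≤ tv → M.V (σ t) → ¬ φ (σ t)) ∧
  (∀ σ, M.PathThrough σ s → ∃ u, tb ≤ u ∧ u ≤ M.depth s ∧
    (M.D (σ u) ∨ u = tb) ∧
    ∀ t, u < t → t ≤ M.depth s → ¬ M.Ea φ (σ t) ∧ ¬ M.D (σ t)) ∧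
  (∀ σ, M.PathThrough σ s →
    ((Finset.Icc tb tv).filter (fun t => M.D (σ t))).card >
    ((Finset.Icc tb tv).filter (fun t => fresh t σ)).card)

/-- Auxiliary, fuel-indexed version of the omission-violation modality.
Since fresh omission-violations counted in condition (4) happen at strictly
smaller times, fuel `tv` suffices, and `ViolOAux tb φ tv tv s` is exactly the
intended fixed point. -/
def ViolOAux (M : NormModel) (tb : ℕ) (φ : M.W → Prop) : ℕ → ℕ → M.W → Prop
  | 0, tv, s => M.ViolOBody tb tv φ s (fun t σ => M.Ea φ (σ t))
  | fuel + 1, tv, s => M.ViolOBody tb tv φ s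
      (fun t σ => M.Ea φ (σ t) ∨ (t < tv ∧ M.ViolOAux tb φ fuel t (σ t)))

/-- Omission-violation `Viol^o_{i,a}(t_b, t_v, φ)` at `s`:
(1) a past-or-current `V ∧ D` state at depth `t_v` on all paths,
(2) `V_{i,a} → ¬φ` on `[t_b, t_v]`,
(3) `¬E_a φ ∧ ¬D_{i,a}` backwards until the last deadline or `t_b`,
(4) on each path, deadlines on `[t_b, t_v]` strictly outnumber states with
`E_a φ` or a fresh omission-violation of `φ`. -/
def ViolO (M : NormModel) (tb tv : ℕ) (φ : M.W → Prop) (s : M.W) : Prop :=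
  M.ViolOAux tb φ tv tv s

/-- A violation in general: by acting or by omission. -/
def Viol (M : NormModel) (tb tv : ℕ) (φ : M.W → Prop) (s : M.W) : Prop :=
  M.ViolA tb tv φ s ∨ M.ViolO tb tv φ s

/-- Repaired violation `RViol_{i,a}(t_b, t_v, t_r, φ)`. -/
def RViol (M : NormModel) (tb tv tr : ℕ) (φ : M.W → Prop) (s : M.W) : Prop :=
  M.Viol tb tv φ s ∧ tv ≤ tr ∧ tr ≤ M.depth s ∧
  (∀ σ, M.PathThrough σ s → M.Ea M.Rep (σ tr)) ∧
  (∀ σ, M.PathThrough σ s →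
    ((Finset.Icc tv tr).filter (fun t => M.Ea M.Rep (σ t))).card ≥
    ((Finset.Icc tb tv).filter (fun t => M.Viol tb t φ (σ t))).card)

/-- Punished violation `PViol_{i,a}(t_b, t_v, t_p, φ)`. -/
def PViol (M : NormModel) (tb tv tp : ℕ) (φ : M.W → Prop) (s : M.W) : Prop :=
  M.Viol tb tv φ s ∧ tv ≤ tp ∧ tp ≤ M.depth s ∧
  (∀ σ, M.PathThrough σ s → M.Ea M.Pun (σ tp)) ∧
  (∀ σ, M.PathThrough σ s →
    ((Finset.Icc tv tp).filter (fun t => M.Ea M.Pun (σ t))).card ≥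
    ((Finset.Icc tb tv).filter (fun t => M.Viol tb t φ (σ t))).card)

/-- Prohibition `F_{i,a}(t_b, φ)` at `s`: if the agent sees to it that `φ`,
then every successor state carries a fresh act-violation. -/
def Forb (M : NormModel) (tb : ℕ) (φ : M.W → Prop) (s : M.W) : Prop :=
  M.Ea φ s → ∀ s', M.R s s' → M.ViolA tb (M.depth s') φ s'

end NormModel

open NormModel

/-! The counterexample lives on the chain `0 → 1 → 2 → ⋯`, which has a single path. Taking
`V = {1}`, `φ = {1}` and `ψ = {0, 1}`, the act-violation of `φ` at depth `1` is witnessed, but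
`ψ` also holds at the root, where there is no violation marker, so clause (2) fails for `ψ`. -/

namespace NormModel

abbrev chain (V : ℕ → Prop) : NormModel where
  W := ℕ
  root := 0
  R n m := m = n + 1
  Ra n m := m = n + 1
  hRa _ _ h := h
  depth := id
  hroot := rfl
  hdepth _ _ h := h
  predUnique _ _ _ h₁ h₂ := by omega
  reach s := by
    induction s with
    | zero => exact .refl
    | succ n ih => exact ih.tail rfl
  V := V
  D _ := False
  Rep _ := False
  Pun _ := False

variable {V : ℕ → Prop}

theorem chain_isPath_iff {σ : ℕ → (chain V).W} : (chain V).IsPath σ ↔ σ = id := by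
  constructor
  · rintro ⟨h₀, hsucc⟩
    funext n
    induction n with
    | zero => exact h₀
    | succ n ih => exact (hsucc n).trans (congrArg (· + 1) ih)
  · rintro rfl
    exact ⟨rfl, fun _ => rfl⟩

theorem chain_pathThrough_iff {σ : ℕ → (chain V).W} {s : (chain V).W} :
    (chain V).PathThrough σ s ↔ σ = id := by
  refine ⟨fun h => chain_isPath_iff.1 h.1, ?_⟩
  rintro rfl
  exact ⟨chain_isPath_iff.2 rfl, rfl⟩

theorem chain_ea_iff {φ : (chain V).W → Prop} {n : (chain V).W} :
    (chain V).Ea φ n ↔ φ (n + 1) ∧ ∃ m, ¬ φ m := by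
  simp only [Ea, chain, forall_eq, not_forall]

theorem chain_violA_iff {tb tv : ℕ} {φ : (chain V).W → Prop} {s : (chain V).W} :
    (chain V).ViolA tb tv φ s ↔ 1 ≤ tv ∧ tv ≤ s ∧ V tv ∧ (chain V).Ea φ (tv - 1) ∧
      ∀ t, tb ≤ t → t ≤ tv → φ t → V t := by
  simp only [ViolA, chain_pathThrough_iff, forall_eq, id, and_assoc]

end NormModel

/-- the act-violation modality is not closed under logical
consequence of its argument: `φ → ψ` everywhere and `Viol^a(t_b,t_v,φ)` at `s`
do not yield `Viol^a(t_b,t_v,ψ)` at `s`. -/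
theorem violA_not_closed_under_consequence :
    ∃ (M : NormModel) (s : M.W) (tb tv : ℕ) (φ ψ : M.W → Prop),
      (∀ x, φ x → ψ x) ∧ M.ViolA tb tv φ s ∧ ¬ M.ViolA tb tv ψ s := by
  refine ⟨chain (· = 1), (1 : ℕ), 0, 1, (· = 1), (· ≤ 1), fun x hx => hx.le, ?_, ?_⟩
  · rw [chain_violA_iff, chain_ea_iff]
    exact ⟨le_rfl, le_rfl, rfl, ⟨rfl, 0, zero_ne_one⟩, fun _ _ _ ht => ht⟩
  · rw [chain_violA_iff]
    intro ⟨_, _, _, _, hψV⟩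
    exact absurd (hψV 0 le_rfl zero_le_one zero_le_one) zero_ne_one
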